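/- Let A = (a_{ij}) be an n×n real matrix with A + Aᵀ negative definite, let m : [0,T] → ℝⁿ be measurable with each product m_i m_j integrable, and let p : [0,T] → ℝⁿ be absolutely continuous with p_i(0) ≥ 0 for all i and dp_i/dt = 2 Σ_{j=1}^n a_{ij} m_i(t) m_j(t) almost everywhere. If p_i(T) = 0 for i = 1,…,n−1, then p_n(T) = p_n(0) + ⟨A_n, M⟩, where M = ∫₀ᵀ m(t)m(t)ᵀ dt is positive semidefinite and satisfies ⟨A_i, M⟩ = −p_i(0) for i = 1,…,n−1; consequently p_n(T) ≤ p_n(0) + ℰ, where ℰ is the supremum of ⟨A_n, M⟩ over feasible M of the associated semidefinite program with p_i = p_i(0). -/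

import Mathlib

open Matrix

/-- Trace inner product on square matrices: ⟨X, Y⟩ = tr(XY). -/
noncomputable def ip {m : ℕ} (X Y : Matrix (Fin m) (Fin m) ℝ) : ℝ := (X * Y).trace

/-- For an m×m matrix `A`, the symmetric matrix `A_i = e_i a_iᵀ + a_i e_iᵀ`,
whose i-th row and column equal the i-th row of `A` (with (i,i) entry `2 A i i`),
all other entries zero. -/
noncomputable def sdpMat {m : ℕ} (A : Matrix (Fin m) (Fin m) ℝ) (i : Fin m) :
    Matrix (Fin m) (Fin m) ℝ :=
  Matrix.of fun k l => (if k = i then A i l else 0) + (if l = i then A i k else 0)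

/-- Feasibility for the semidefinite program associated to an (n+1)×(n+1) matrix `A`
and data `p`: `M ⪰ 0` and `⟨A_i, M⟩ = -p_i` for every non-final index `i`. -/
def Feasible {n : ℕ} (A : Matrix (Fin (n + 1)) (Fin (n + 1)) ℝ)
    (p : Fin (n + 1) → ℝ) (M : Matrix (Fin (n + 1)) (Fin (n + 1)) ℝ) : Prop :=
  M.PosSemidef ∧ ∀ i : Fin (n + 1), i ≠ Fin.last n → ip (sdpMat A i) M = -(p i)

open MeasureTheory

/-!
Put `M = ∫₀ᵀ m mᵀ dt`, a Gram matrix and hence positive semidefinite. Since `M` is symmetric,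
`⟨A_i, M⟩ = 2 ∑ⱼ a_{ij} M_{ij}`, which is exactly the integral of the right-hand side of the
`i`-th equation; so `p_i(T) = p_i(0) + ⟨A_i, M⟩` for every `i`, and `p_i(T) = 0` makes `M`
feasible. The supremum `ℰ` is finite because `∑ᵢ A_i = A + Aᵀ` and `⟨A + Aᵀ, M⟩ ≤ 0` for
`M ⪰ 0`, so every feasible objective value is at most `∑_{i<n} p_i`.
-/

section GramIntegral

variable {α ι : Type*} [MeasurableSpace α]

noncomputable def gramIntegral (μ : Measure α) (f : α → ι → ℝ) : Matrix ι ι ℝ :=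
  Matrix.of fun i j => ∫ t, f t i * f t j ∂μ

variable {μ : Measure α} {f : α → ι → ℝ}

lemma gramIntegral_isSymm : (gramIntegral μ f).IsSymm :=
  IsSymm.ext fun i j => by simp only [gramIntegral, of_apply, mul_comm]

lemma dotProduct_gramIntegral_mulVec [Fintype ι]
    (hf : ∀ i j, Integrable (fun t => f t i * f t j) μ) (x : ι → ℝ) :
    x ⬝ᵥ gramIntegral μ f *ᵥ x = ∫ t, (x ⬝ᵥ f t) ^ 2 ∂μ := by
  have hterm : ∀ a b, Integrable (fun t => x a * x b * (f t a * f t b)) μ :=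
    fun a b => (hf a b).const_mul _
  calc x ⬝ᵥ gramIntegral μ f *ᵥ x
      = ∑ a, ∑ b, ∫ t, x a * x b * (f t a * f t b) ∂μ := by
        simp only [dotProduct, mulVec, gramIntegral, of_apply, Finset.mul_sum,
          integral_const_mul]
        exact Finset.sum_congr rfl fun a _ => Finset.sum_congr rfl fun b _ => by ring
    _ = ∫ t, ∑ a, ∑ b, x a * x b * (f t a * f t b) ∂μ := by
        rw [integral_finsetSum _ fun a _ => integrable_finsetSum _ fun b _ => hterm a b]
        exact Finset.sum_congr rfl fun a _ => (integral_finsetSum _ fun b _ => hterm a b).symm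
    _ = ∫ t, (x ⬝ᵥ f t) ^ 2 ∂μ := by
        congr 1 with t
        rw [sq, dotProduct, Finset.sum_mul_sum]
        exact Finset.sum_congr rfl fun a _ => Finset.sum_congr rfl fun b _ => by ring

lemma posSemidef_gramIntegral [Fintype ι] (hf : ∀ i j, Integrable (fun t => f t i * f t j) μ) :
    (gramIntegral μ f).PosSemidef := by
  refine posSemidef_iff_dotProduct_mulVec.mpr
    ⟨isHermitian_iff_isSymm.mpr gramIntegral_isSymm, fun x => ?_⟩
  rw [star_trivial, dotProduct_gramIntegral_mulVec hf]
  exact integral_nonneg fun t => sq_nonneg _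

end GramIntegral

open scoped MatrixOrder Matrix.Norms.L2Operator in
lemma Matrix.PosSemidef.trace_mul_nonneg {ι : Type*} [Fintype ι] [DecidableEq ι]
    {P Q : Matrix ι ι ℝ} (hP : P.PosSemidef) (hQ : Q.PosSemidef) : 0 ≤ (P * Q).trace := by
  obtain ⟨B, rfl⟩ := CStarAlgebra.nonneg_iff_eq_star_mul_self.mp hP.nonneg
  rw [star_eq_conjTranspose, Matrix.mul_assoc, trace_mul_comm]
  exact (hQ.mul_mul_conjTranspose_same B).trace_nonneg

section SDP

variable {k : ℕ}

lemma ip_sdpMat_of_isSymm (A : Matrix (Fin k) (Fin k) ℝ) {M : Matrix (Fin k) (Fin k) ℝ}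
    (hM : M.IsSymm) (i : Fin k) : ip (sdpMat A i) M = 2 * ∑ j, A i j * M i j := by
  simp only [ip, sdpMat, trace, diag_apply, mul_apply, of_apply, add_mul, ite_mul, zero_mul,
    Finset.sum_add_distrib]
  rw [Finset.sum_comm]
  simp only [Finset.sum_ite_eq', Finset.mem_univ, if_true, hM.apply i, two_mul]

lemma integral_two_mul_sum_eq_ip_sdpMat {α : Type*} [MeasurableSpace α] {μ : Measure α}
    {f : α → Fin k → ℝ} (hf : ∀ i j, Integrable (fun t => f t i * f t j) μ)
    (A : Matrix (Fin k) (Fin k) ℝ) (i : Fin k) :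
    ∫ t, 2 * ∑ j, A i j * (f t i * f t j) ∂μ = ip (sdpMat A i) (gramIntegral μ f) := by
  rw [ip_sdpMat_of_isSymm A gramIntegral_isSymm, integral_const_mul,
    integral_finsetSum _ fun j _ => (hf i j).const_mul _]
  simp only [integral_const_mul, gramIntegral, of_apply]

lemma sum_sdpMat (A : Matrix (Fin k) (Fin k) ℝ) : ∑ i, sdpMat A i = A + Aᵀ := by
  ext a b
  simp [sdpMat, Matrix.sum_apply, Finset.sum_add_distrib]

lemma sum_ip_sdpMat_nonpos {A M : Matrix (Fin k) (Fin k) ℝ} (hA : (-(A + Aᵀ)).PosSemidef)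
    (hM : M.PosSemidef) : ∑ i, ip (sdpMat A i) M ≤ 0 := by
  have h := hA.trace_mul_nonneg hM
  rw [Matrix.neg_mul, trace_neg, ← sum_sdpMat, Finset.sum_mul, trace_sum] at h
  exact neg_nonneg.mp h

variable {n : ℕ} {A : Matrix (Fin (n + 1)) (Fin (n + 1)) ℝ} {p : Fin (n + 1) → ℝ}

lemma Feasible.objective_le {M : Matrix (Fin (n + 1)) (Fin (n + 1)) ℝ}
    (hA : (-(A + Aᵀ)).PosSemidef) (hM : Feasible A p M) :
    ip (sdpMat A (Fin.last n)) M ≤ ∑ i ∈ Finset.univ.erase (Fin.last n), p i := by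
  have hsplit := Finset.sum_erase_add _ (fun i => ip (sdpMat A i) M)
    (Finset.mem_univ (Fin.last n))
  rw [Finset.sum_congr rfl fun i hi => hM.2 i (Finset.ne_of_mem_erase hi),
    Finset.sum_neg_distrib] at hsplit
  linarith [sum_ip_sdpMat_nonpos hA hM.1]

lemma bddAbove_objective (hA : (-(A + Aᵀ)).PosSemidef) :
    BddAbove {E : ℝ | ∃ M, Feasible A p M ∧ ip (sdpMat A (Fin.last n)) M = E} := by
  refine ⟨∑ i ∈ Finset.univ.erase (Fin.last n), p i, ?_⟩
  rintro _ ⟨M, hM, rfl⟩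
  exact hM.objective_le hA

end SDP

theorem trajectory_value_eq_sdp_objective_general (n : ℕ)
    (A : Matrix (Fin (n + 1)) (Fin (n + 1)) ℝ)
    (hA : (-(A + Aᵀ)).PosDef)
    (T : ℝ) (hT : 0 ≤ T)
    (m : ℝ → Fin (n + 1) → ℝ)
    (hint : ∀ i j, IntegrableOn (fun t => m t i * m t j) (Set.Ioc 0 T))
    (p : ℝ → Fin (n + 1) → ℝ)
    (hpeq : ∀ i, ∀ t ∈ Set.Icc (0 : ℝ) T,
      p t i = p 0 i + ∫ s in Set.Ioc (0 : ℝ) t, 2 * ∑ j, A i j * (m s i * m s j))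
    (hend : ∀ i : Fin (n + 1), i ≠ Fin.last n → p T i = 0) :
    Feasible A (fun i => p 0 i)
      (Matrix.of fun i j => ∫ t in Set.Ioc (0 : ℝ) T, m t i * m t j) ∧
    p T (Fin.last n) = p 0 (Fin.last n) +
      ip (sdpMat A (Fin.last n))
        (Matrix.of fun i j => ∫ t in Set.Ioc (0 : ℝ) T, m t i * m t j) ∧
    p T (Fin.last n) ≤ p 0 (Fin.last n) +
      sSup {E : ℝ | ∃ M', Feasible A (fun i => p 0 i) M' ∧
        ip (sdpMat A (Fin.last n)) M' = E} := by
  set M := gramIntegral (volume.restrict (Set.Ioc 0 T)) m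
  have hvalue : ∀ i, p T i = p 0 i + ip (sdpMat A i) M := fun i => by
    rw [hpeq i T ⟨hT, le_rfl⟩, integral_two_mul_sum_eq_ip_sdpMat hint]
  have hfeas : Feasible A (fun i => p 0 i) M :=
    ⟨posSemidef_gramIntegral hint, fun i hi => by linarith [hvalue i, hend i hi]⟩
  refine ⟨hfeas, hvalue _, ?_⟩
  rw [hvalue]
  gcongr
  exact le_csSup (bddAbove_objective hA.posSemidef) ⟨M, hfeas, rfl⟩

/-- If `p` is (absolutely continuous, given via the fundamental theorem of calculus) a
solution of `dp_i/dt = 2 ∑_j a_{ij} m_i m_j` with `p_i(0) ≥ 0` and `p_i(T) = 0` for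
`i ≠ n`, then `p_n(T) = p_n(0) + ⟨A_n, M⟩`, where `M = ∫₀ᵀ m mᵀ dt` is feasible for the
associated semidefinite program; consequently `p_n(T) ≤ p_n(0) + ℰ`, where `ℰ` is the
supremum of the objective over feasible matrices. -/
theorem trajectory_value_eq_sdp_objective (n : ℕ)
    (A : Matrix (Fin (n + 1)) (Fin (n + 1)) ℝ)
    (hA : (-(A + Aᵀ)).PosDef)
    (T : ℝ) (hT : 0 ≤ T)
    (m : ℝ → Fin (n + 1) → ℝ)
    (hmeas : ∀ i, Measurable fun t => m t i)
    (hint : ∀ i j, IntegrableOn (fun t => m t i * m t j) (Set.Ioc 0 T))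
    (p : ℝ → Fin (n + 1) → ℝ)
    (hp0 : ∀ i, 0 ≤ p 0 i)
    (hpeq : ∀ i, ∀ t ∈ Set.Icc (0 : ℝ) T,
      p t i = p 0 i + ∫ s in Set.Ioc (0 : ℝ) t, 2 * ∑ j, A i j * (m s i * m s j))
    (hend : ∀ i : Fin (n + 1), i ≠ Fin.last n → p T i = 0) :
    Feasible A (fun i => p 0 i)
      (Matrix.of fun i j => ∫ t in Set.Ioc (0 : ℝ) T, m t i * m t j) ∧
    p T (Fin.last n) = p 0 (Fin.last n) +
      ip (sdpMat A (Fin.last n))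
        (Matrix.of fun i j => ∫ t in Set.Ioc (0 : ℝ) T, m t i * m t j) ∧
    p T (Fin.last n) ≤ p 0 (Fin.last n) +
      sSup {E : ℝ | ∃ M', Feasible A (fun i => p 0 i) M' ∧
        ip (sdpMat A (Fin.last n)) M' = E} :=
  trajectory_value_eq_sdp_objective_general n A hA T hT m hint p hpeq hend
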